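/- Let X be a Banach space and T a strongly continuous semigroup of bounded linear operators on X. The following statements are equivalent: (i) T is exponentially stable, i.e. there exist M, ω > 0 with ‖T(t)x‖ ≤ M e^{−ωt} ‖x‖ for all t ≥ 0 and x ∈ X; (ii) {0} is uniformly globally asymptotically stable, i.e. there is β ∈ 𝒦ℒ with ‖T(t)x‖ ≤ β(‖x‖, t) for all t ≥ 0, x ∈ X; (iii) {0} is uniformly globally attractive, i.e. for all ε, r > 0 there is τ such that ‖x‖ ≤ r and t ≥ τ imply ‖T(t)x‖ ≤ ε; (iv) {0} is uniformly globally weakly attractive, i.e. for all ε, r > 0 there is τ such that for every x with ‖x‖ ≤ r there exists t ≤ τ with ‖T(t)x‖ ≤ ε; (v) there exists a non-coercive Lyapunov function, i.e. a continuous V : X → [0,∞) with V(0) = 0, some ψ₂ ∈ 𝒦_∞ with 0 < V(x) ≤ ψ₂(‖x‖) for all x ≠ 0, and some α ∈ 𝒦 with liminf_{t→0⁺} (V(T(t)x) − V(x))/t ≤ −α(‖x‖) for all x ≠ 0. -/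

import Mathlib

/-!
(i) ⇒ (ii) ⇒ (iii) ⇒ (iv) are immediate, with `β(r, t) = M r e^{-ωt}`.

(iv) ⇒ (i): by linearity, uniform weak attractivity gives a time `τ` within which every orbit
halves its norm. Together with the Banach–Steinhaus bound `‖T(t)‖ ≤ C` on `[0, τ]` this first
bounds `‖T(t)‖ ≤ C` for all `t`, and then `‖T(t)‖ ≤ C 2^{-⌊t/τ⌋}`.

(i) ⇒ (v): take `V(x) = ∫₀^∞ ‖T(t)x‖ dt`. It is subadditive and bounded by `(M/ω)‖x‖`, hence
Lipschitz, and `V(T(s)x) = V(x) - ∫₀^s ‖T(t)x‖ dt`, so its right derivative along the orbit at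
`s = 0` is `-‖x‖`; in particular `V(x) > 0` for `x ≠ 0`.

(v) ⇒ (iv): if the orbit of `x` stayed outside the `ε`-ball up to time `τ`, then `V` would
decrease along it at rate at least `α(ε)`, so `0 ≤ V(T(τ)x) ≤ ψ₂(r) - α(ε)τ`, which fails for
`τ > ψ₂(r)/α(ε)`.
-/

open scoped NNReal ENNReal
open Filter Topology Bornology

noncomputable section

/-- Functions of class 𝒦: continuous, strictly increasing, vanishing at zero. -/
def ClassK (γ : ℝ≥0 → ℝ≥0) : Prop :=
  Continuous γ ∧ StrictMono γ ∧ γ 0 = 0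

/-- Functions of class 𝒦∞: class 𝒦 and unbounded. -/
def ClassKinf (γ : ℝ≥0 → ℝ≥0) : Prop :=
  ClassK γ ∧ ∀ M : ℝ≥0, ∃ r : ℝ≥0, M < γ r

/-- Functions of class 𝒦ℒ. -/
def ClassKL (β : ℝ≥0 → ℝ≥0 → ℝ≥0) : Prop :=
  Continuous (fun p : ℝ≥0 × ℝ≥0 => β p.1 p.2) ∧
  (∀ t : ℝ≥0, ClassK fun r => β r t) ∧
  ∀ r : ℝ≥0, 0 < r →
    StrictAnti (fun t => β r t) ∧ Tendsto (fun t => β r t) atTop (𝓝 0)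

/-- Distance of a point to a set, `‖x‖_A`. -/
def dA {X : Type*} [NormedAddCommGroup X] (A : Set X) (x : X) : ℝ≥0 :=
  (Metric.infDist x A).toNNReal

/-- The open ε-neighborhood `B_ε(A)` of a set. -/
def ballSet {X : Type*} [NormedAddCommGroup X] (ε : ℝ≥0) (A : Set X) : Set X :=
  {x | dA A x < ε}

/-- A (time-invariant) control system with disturbances. -/
structure System (X : Type*) [NormedAddCommGroup X] [NormedSpace ℝ X]
    (W : Type*) [NormedAddCommGroup W] [NormedSpace ℝ W] where
  /-- the set of disturbance values -/
  D : Set W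
  D_nonempty : D.Nonempty
  /-- the space of disturbances -/
  Dist : Set (ℝ≥0 → W)
  dist_mem : ∀ d ∈ Dist, ∀ t : ℝ≥0, d t ∈ D
  /-- axiom of shift invariance -/
  shift_invariant : ∀ d ∈ Dist, ∀ τ : ℝ≥0, (fun t => d (t + τ)) ∈ Dist
  /-- axiom of concatenation -/
  concat_mem : ∀ d₁ ∈ Dist, ∀ d₂ ∈ Dist, ∀ t : ℝ≥0, 0 < t →
      (fun s => if s ≤ t then d₁ s else d₂ (s - t)) ∈ Dist
  /-- the transition map -/
  φ : ℝ≥0 → X → (ℝ≥0 → W) → X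
  identity : ∀ (x : X), ∀ d ∈ Dist, φ 0 x d = x
  causality : ∀ (t : ℝ≥0) (x : X), ∀ d ∈ Dist, ∀ d' ∈ Dist,
      (∀ s ≤ t, d s = d' s) → φ t x d = φ t x d'
  cont : ∀ (x : X), ∀ d ∈ Dist, Continuous fun t : ℝ≥0 => φ t x d
  cocycle : ∀ (t h : ℝ≥0) (x : X), ∀ d ∈ Dist,
      φ h (φ t x d) (fun s => d (t + s)) = φ (t + h) x d

namespace System

variable {X : Type*} [NormedAddCommGroup X] [NormedSpace ℝ X]
variable {W : Type*} [NormedAddCommGroup W] [NormedSpace ℝ W]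
variable (S : System X W)

/-- Reachability set within time `T`. -/
def RT (T : ℝ≥0) (B : Set X) : Set X :=
  {y | ∃ t ≤ T, ∃ d ∈ S.Dist, ∃ x ∈ B, y = S.φ t x d}

/-- Reachability set. -/
def R (B : Set X) : Set X :=
  {y | ∃ t : ℝ≥0, ∃ d ∈ S.Dist, ∃ x ∈ B, y = S.φ t x d}

/-- Robust forward completeness. -/
def RFC : Prop :=
  ∀ C : ℝ≥0, 0 < C → ∀ τ : ℝ≥0, 0 < τ →
    IsBounded (S.RT τ {x : X | ‖x‖₊ ≤ C})

/-- Invariance of a set. -/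
def Invariant (A : Set X) : Prop := S.R A ⊆ A

/-- Robust invariance of a set. -/
def RobustlyInvariant (A : Set X) : Prop :=
  S.Invariant A ∧
  ∀ ε : ℝ≥0, 0 < ε → ∀ h : ℝ≥0, 0 < h → ∃ δ : ℝ≥0, 0 < δ ∧
    ∀ t : ℝ≥0, t ≤ h → ∀ x : X, dA A x ≤ δ → ∀ d ∈ S.Dist, dA A (S.φ t x d) ≤ ε

/-- Lagrange stability of a set. -/
def LagrangeStable (A : Set X) : Prop :=
  ∃ σ : ℝ≥0 → ℝ≥0, ClassKinf σ ∧ ∃ c : ℝ≥0, 0 < c ∧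
    ∀ (x : X), ∀ d ∈ S.Dist, ∀ t : ℝ≥0, dA A (S.φ t x d) ≤ σ (dA A x) + c

/-- Uniform (local) stability of a set. -/
def ULS (A : Set X) : Prop :=
  ∀ ε : ℝ≥0, 0 < ε → ∃ δ : ℝ≥0, 0 < δ ∧
    ∀ x : X, dA A x ≤ δ → ∀ d ∈ S.Dist, ∀ t : ℝ≥0, dA A (S.φ t x d) ≤ ε

/-- Uniform global stability of a set. -/
def UGS (A : Set X) : Prop :=
  ∃ σ : ℝ≥0 → ℝ≥0, ClassKinf σ ∧
    ∀ (x : X), ∀ d ∈ S.Dist, ∀ t : ℝ≥0, dA A (S.φ t x d) ≤ σ (dA A x)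

/-- Uniform global asymptotic stability of a set. -/
def UGAS (A : Set X) : Prop :=
  ∃ β : ℝ≥0 → ℝ≥0 → ℝ≥0, ClassKL β ∧
    ∀ (x : X), ∀ d ∈ S.Dist, ∀ t : ℝ≥0, dA A (S.φ t x d) ≤ β (dA A x) t

/-- Practical uniform global asymptotic stability of a set. -/
def PUGASSet (A : Set X) : Prop :=
  ∃ β : ℝ≥0 → ℝ≥0 → ℝ≥0, ClassKL β ∧ ∃ c : ℝ≥0, 0 < c ∧
    ∀ (x : X), ∀ d ∈ S.Dist, ∀ t : ℝ≥0, dA A (S.φ t x d) ≤ β (dA A x) t + c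

/-- Global weak attractivity of a set. -/
def GWA (A : Set X) : Prop :=
  ∀ (x : X), ∀ d ∈ S.Dist, ∀ ε : ℝ≥0, 0 < ε → ∃ t : ℝ≥0, dA A (S.φ t x d) ≤ ε

/-- Uniform global weak attractivity of a set. -/
def UGWA (A : Set X) : Prop :=
  ∀ ε : ℝ≥0, 0 < ε → ∀ r : ℝ≥0, 0 < r → ∃ τ : ℝ≥0,
    ∀ x : X, dA A x ≤ r → ∀ d ∈ S.Dist, ∃ t ≤ τ, dA A (S.φ t x d) ≤ ε

/-- Uniform global attractivity of a set. -/
def UGATT (A : Set X) : Prop :=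
  ∀ ε : ℝ≥0, 0 < ε → ∀ r : ℝ≥0, 0 < r → ∃ τ : ℝ≥0,
    ∀ x : X, dA A x ≤ r → ∀ d ∈ S.Dist, ∀ t : ℝ≥0, τ ≤ t → dA A (S.φ t x d) ≤ ε

/-- Uniform ultimate boundedness of the system. -/
def UUB : Prop :=
  ∃ K : ℝ≥0, 0 < K ∧ ∀ r : ℝ≥0, 0 < r → ∃ T : ℝ≥0,
    ∀ x : X, ‖x‖₊ ≤ r → ∀ d ∈ S.Dist, ∀ t : ℝ≥0, T ≤ t → ‖S.φ t x d‖₊ ≤ K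

/-- Global recurrence of a set. -/
def GloballyRecurrent (A : Set X) : Prop :=
  ∀ (x : X), ∀ d ∈ S.Dist, ∃ t : ℝ≥0, S.φ t x d ∈ A

/-- Uniform global recurrence of a set. -/
def UniformlyGloballyRecurrent (A : Set X) : Prop :=
  ∀ R : ℝ≥0, 0 < R → ∃ τ : ℝ≥0,
    ∀ x : X, dA A x ≤ R → ∀ d ∈ S.Dist, ∃ t ≤ τ, S.φ t x d ∈ A

/-- The set `P₊(A) = ⋂_{ε>0} ℛ(B_ε(A))`. -/
def Pplus (A : Set X) : Set X := ⋂ (ε : ℝ≥0) (_ : 0 < ε), S.R (ballSet ε A)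

/-- Non-coercive Lyapunov function w.r.t. a bounded set `A`. -/
def NonCoerciveLyapunov (A : Set X) (V : X → ℝ) : Prop :=
  Continuous V ∧ (∀ x : X, 0 ≤ V x) ∧ (∀ x ∈ A, V x = 0) ∧
  (∃ ψ₂ : ℝ≥0 → ℝ≥0, ClassKinf ψ₂ ∧
    ∀ x ∉ A, 0 < V x ∧ V x ≤ (ψ₂ (dA A x) : ℝ)) ∧
  (∃ α : ℝ≥0 → ℝ≥0, ClassK α ∧ ∀ x ∉ A, ∀ d ∈ S.Dist,
    Filter.liminf (fun t : ℝ≥0 => (V (S.φ t x d) - V x) / (t : ℝ))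
      (𝓝[>] (0 : ℝ≥0)) ≤ -(α (dA A x) : ℝ))

/-- The system is Lagrange stable if some bounded nonempty set is Lagrange stable. -/
def SystemLagrangeStable : Prop :=
  ∃ A : Set X, A.Nonempty ∧ IsBounded A ∧ S.LagrangeStable A

/-- The system is pUGAS if some bounded nonempty set is pUGAS. -/
def SystemPUGAS : Prop :=
  ∃ A : Set X, A.Nonempty ∧ IsBounded A ∧ S.PUGASSet A

end System

theorem classK_id : ClassK id := ⟨continuous_id, strictMono_id, rfl⟩

theorem classKinf_const_mul {K : ℝ≥0} (hK : 0 < K) : ClassKinf fun r => K * r :=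
  ⟨⟨by fun_prop, fun _ _ h => mul_lt_mul_of_pos_left h hK, mul_zero K⟩,
    fun M => ⟨M / K + 1, by
      simpa [mul_add, mul_div_cancel₀ _ hK.ne'] using lt_add_of_pos_right M hK⟩⟩

theorem classKL_mul_exp {M ω : ℝ} (hM : 0 < M) (hω : 0 < ω) :
    ClassKL fun r t => (M * r * Real.exp (-ω * t)).toNNReal := by
  refine ⟨by fun_prop, fun t => ⟨by fun_prop, fun a b hab => ?_, by simp⟩, fun r hr => ⟨?_, ?_⟩⟩
  · rw [Real.toNNReal_lt_toNNReal_iff_of_nonneg (by positivity)]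
    gcongr
  · intro a b hab
    rw [Real.toNNReal_lt_toNNReal_iff_of_nonneg (by positivity)]
    have hr' : (0 : ℝ) < r := hr
    have hab' : (a : ℝ) < b := hab
    exact mul_lt_mul_of_pos_left (Real.exp_lt_exp.2 (by nlinarith)) (by positivity)
  · have h : Tendsto (fun t : ℝ≥0 => -ω * t) atTop atBot :=
      (NNReal.tendsto_coe_atTop.2 tendsto_id).const_mul_atTop_of_neg (neg_neg_of_pos hω)
    simpa [Function.comp_def] using (continuous_real_toNNReal.tendsto _).comp
      ((Real.tendsto_exp_atBot.comp h).const_mul (M * r))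

theorem ClassKL.exists_forall_le {β : ℝ≥0 → ℝ≥0 → ℝ≥0} (hβ : ClassKL β) {ε r : ℝ≥0}
    (hε : 0 < ε) (hr : 0 < r) : ∃ τ, ∀ ρ ≤ r, ∀ t, τ ≤ t → β ρ t ≤ ε := by
  obtain ⟨τ, hτ⟩ := ((hβ.2.2 r hr).2.eventually_lt_const hε).exists_forall_of_atTop
  exact ⟨τ, fun ρ hρ t ht => ((hβ.2.1 t).2.1.monotone hρ).trans
    (((hβ.2.2 r hr).1.antitone ht).trans (hτ τ le_rfl).le)⟩

/-- In `ℝ`, a liminf that is not cobounded takes the junk value `0` (the `sSup` of an unbounded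
set), so a negative upper bound on the liminf is a genuine one. -/
theorem Real.frequently_lt_of_liminf_le_of_neg {α : Type*} {f : α → ℝ} {l : Filter α} {c r : ℝ}
    (hc : c < 0) (h : liminf f l ≤ c) (hr : c < r) : ∃ᶠ x in l, f x < r := by
  refine frequently_lt_of_liminf_lt ?_ (h.trans_lt hr)
  by_contra hcob
  have hunb : ¬ BddAbove {a : ℝ | ∀ᶠ y in l, a ≤ f y} := fun ⟨b, hb⟩ =>
    hcob ⟨b, fun a ha => hb (by simpa [Filter.eventually_map] using ha)⟩
  rw [Filter.liminf_eq, Real.sSup_of_not_bddAbove hunb] at h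
  linarith

theorem NNReal.tendsto_const_add_coe_nhdsGT (u : ℝ) :
    Tendsto (fun h : ℝ≥0 => u + h) (𝓝[>] 0) (𝓝[>] u) := by
  refine tendsto_nhdsWithin_iff.2 ⟨?_, ?_⟩
  · simpa using tendsto_const_nhds.add
      ((NNReal.continuous_coe.tendsto 0).mono_left nhdsWithin_le_nhds)
  · filter_upwards [self_mem_nhdsWithin] with h (hh : 0 < h)
    simpa using hh

theorem NNReal.le_sub_mul_of_liminf_slope_le {g : ℝ≥0 → ℝ} (hg : Continuous g) {c : ℝ}
    (hc : 0 < c) {τ : ℝ≥0}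
    (hslope : ∀ u < τ, liminf (fun h : ℝ≥0 => (g (u + h) - g u) / h) (𝓝[>] 0) ≤ -c) :
    g τ ≤ g 0 - c * τ := by
  set G : ℝ → ℝ := fun u => g u.toNNReal
  have hbound : ∀ u ∈ Set.Ico (0 : ℝ) τ, ∀ r, -c < r → ∃ᶠ z in 𝓝[>] u, slope G u z < r := by
    intro u hu r hr
    have hfreq := Real.frequently_lt_of_liminf_le_of_neg (neg_neg_of_pos hc)
      (hslope u.toNNReal (by simpa [Real.toNNReal_lt_iff_lt_coe hu.1] using hu.2)) hr
    refine Frequently.filter_mono (frequently_map.2 (hfreq.mono fun h hh => ?_))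
      (NNReal.tendsto_const_add_coe_nhdsGT u)
    rwa [slope_def_field, add_sub_cancel_left, show G (u + h) = g (u.toNNReal + h) by
      simp only [G, Real.toNNReal_add hu.1 h.coe_nonneg, Real.toNNReal_coe]]
  have := image_le_of_liminf_slope_right_le_deriv_boundary (f := G) (a := 0) (b := τ)
    (B := fun u => g 0 - c * u) (B' := fun _ => -c) (by fun_prop) (by simp [G]) (by fun_prop)
    (fun u _ => by simpa using ((hasDerivAt_id u).const_mul c).const_sub (g 0) |>.hasDerivWithinAt)
    hbound (Set.right_mem_Icc.2 τ.coe_nonneg)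
  simpa [G] using this

theorem exists_time_nnnorm_le_of_lyapunov {X : Type*} [NormedAddCommGroup X] {Φ : ℝ≥0 → X → X}
    (hΦ0 : ∀ x, Φ 0 x = x) (hΦadd : ∀ t s x, Φ (t + s) x = Φ t (Φ s x))
    (hΦcont : ∀ x, Continuous fun t => Φ t x) {V : X → ℝ} (hV : Continuous V)
    (hV0 : ∀ x, 0 ≤ V x) {ψ α : ℝ≥0 → ℝ≥0} (hψ : Monotone ψ) (hVψ : ∀ x ≠ 0, V x ≤ ψ ‖x‖₊)
    (hα : ClassK α)
    (hdecay : ∀ x ≠ 0,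
      liminf (fun t : ℝ≥0 => (V (Φ t x) - V x) / t) (𝓝[>] 0) ≤ -(α ‖x‖₊ : ℝ))
    {ε : ℝ≥0} (hε : 0 < ε) (r : ℝ≥0) :
    ∃ τ : ℝ≥0, ∀ x : X, ‖x‖₊ ≤ r → ∃ t ≤ τ, ‖Φ t x‖₊ ≤ ε := by
  have hαε : (0 : ℝ) < α ε := by simpa [hα.2.2] using hα.2.1 hε
  refine ⟨ψ r / α ε + 1, fun x hx => ?_⟩
  by_contra! hfar
  have hx0 : x ≠ 0 := by
    rintro rfl
    simpa [hΦ0] using hfar 0 zero_le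
  have hlin := NNReal.le_sub_mul_of_liminf_slope_le (g := fun t => V (Φ t x))
    (hV.comp (hΦcont x)) hαε fun u hu => by
      have hy : ε < ‖Φ u x‖₊ := hfar u hu.le
      simp only [add_comm u, hΦadd]
      refine (hdecay _ (ne_zero_of_nnnorm_ne_zero (pos_of_gt hy).ne')).trans ?_
      exact neg_le_neg (by exact_mod_cast hα.2.1.monotone hy.le)
  have hVx : V x ≤ ψ r := (hVψ x hx0).trans (by exact_mod_cast hψ hx)
  have hτ : (α ε : ℝ) * ((ψ r / α ε + 1 : ℝ≥0) : ℝ) = ψ r + α ε := by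
    push_cast
    field_simp
  simp only [hΦ0] at hlin
  linarith [hV0 (Φ (ψ r / α ε + 1) x)]

theorem ContinuousLinearMap.exists_opNorm_le_of_isCompact {𝕜 E F ι : Type*}
    [NontriviallyNormedField 𝕜] [NormedAddCommGroup E] [NormedSpace 𝕜 E] [CompleteSpace E]
    [NormedAddCommGroup F] [NormedSpace 𝕜 F] [TopologicalSpace ι] {T : ι → E →L[𝕜] F}
    (hT : ∀ x, Continuous fun i => T i x) {K : Set ι} (hK : IsCompact K) :
    ∃ C, ∀ i ∈ K, ‖T i‖ ≤ C := by
  obtain ⟨C, hC⟩ := banach_steinhaus (g := fun i : K => T i) fun x =>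
    (hK.exists_bound_of_continuousOn (hT x).continuousOn).imp fun _ h i => h i i.2
  exact ⟨C, fun i hi => hC ⟨i, hi⟩⟩

section Halving

variable {X : Type*} [NormedAddCommGroup X] [NormedSpace ℝ X] {T : ℝ≥0 → X →L[ℝ] X} {τ : ℝ≥0}

theorem apply_eq_apply_sub_apply (hTadd : ∀ t s, T (t + s) = (T t).comp (T s)) {s t : ℝ≥0}
    (hst : s ≤ t) (x : X) : T t x = T (t - s) (T s x) := by
  rw [← ContinuousLinearMap.comp_apply, ← hTadd, tsub_add_cancel_of_le hst]

theorem exists_norm_apply_le_half (h : ∀ x : X, ‖x‖₊ ≤ 1 → ∃ t ≤ τ, ‖T t x‖₊ ≤ 1 / 2) (x : X) :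
    ∃ t ≤ τ, ‖T t x‖ ≤ ‖x‖ / 2 := by
  rcases eq_or_ne x 0 with rfl | hx
  · exact ⟨0, zero_le, by simp⟩
  obtain ⟨t, ht, hTt⟩ := h (‖x‖⁻¹ • x) (by simp [nnnorm_smul, hx])
  refine ⟨t, ht, ?_⟩
  have hTt' : ‖x‖⁻¹ * ‖T t x‖ ≤ 1 / 2 := by
    simpa [nnnorm_smul, ← NNReal.coe_le_coe] using hTt
  rwa [inv_mul_le_iff₀ (norm_pos_iff.2 hx), mul_one_div] at hTt'

/-- The supremum `B` of `‖T v‖` over `v ≤ s` satisfies `B ≤ max C (B / 2)`: for `v > τ` one first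
halves `x` within time `τ` and then applies some `T (v - t)`. -/
theorem opNorm_le_of_halving (hTadd : ∀ t s, T (t + s) = (T t).comp (T s))
    (hloc : ∀ s, ∃ D, ∀ t ≤ s, ‖T t‖ ≤ D) {C : ℝ} (hC : ∀ t ≤ τ, ‖T t‖ ≤ C)
    (hhalf : ∀ x, ∃ t ≤ τ, ‖T t x‖ ≤ ‖x‖ / 2) (s : ℝ≥0) : ‖T s‖ ≤ C := by
  obtain ⟨D, hD⟩ := hloc s
  set B := sSup ((fun v => ‖T v‖) '' Set.Iic s)
  have hbdd : BddAbove ((fun v => ‖T v‖) '' Set.Iic s) :=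
    ⟨D, by rintro _ ⟨v, hv, rfl⟩; exact hD v hv⟩
  have hB : ∀ v ≤ s, ‖T v‖ ≤ B := fun v hv => le_csSup hbdd ⟨v, hv, rfl⟩
  have hC0 : 0 ≤ C := (norm_nonneg _).trans (hC 0 zero_le)
  have hmax : ∀ v ≤ s, ‖T v‖ ≤ max C (B / 2) := by
    intro v hv
    rcases le_or_gt v τ with hvτ | hτv
    · exact (hC v hvτ).trans (le_max_left _ _)
    refine ContinuousLinearMap.opNorm_le_bound _ (hC0.trans (le_max_left _ _)) fun x => ?_
    obtain ⟨t, ht, hTt⟩ := hhalf x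
    calc ‖T v x‖ ≤ ‖T (v - t)‖ * ‖T t x‖ :=
          apply_eq_apply_sub_apply hTadd (ht.trans hτv.le) x ▸ (T (v - t)).le_opNorm _
      _ ≤ B * (‖x‖ / 2) := by
          gcongr
          · exact (norm_nonneg _).trans (hB 0 zero_le)
          · exact hB _ (tsub_le_self.trans hv)
      _ = B / 2 * ‖x‖ := by ring
      _ ≤ max C (B / 2) * ‖x‖ := by gcongr; exact le_max_right _ _
  have hBle : B ≤ max C (B / 2) :=
    csSup_le ⟨_, 0, Set.mem_Iic.2 zero_le, rfl⟩ (by rintro _ ⟨v, hv, rfl⟩; exact hmax v hv)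
  have hBC : B ≤ C := by
    rcases max_cases C (B / 2) with ⟨h, _⟩ | ⟨h, _⟩ <;> rw [h] at hBle <;> linarith
  exact (hB s le_rfl).trans hBC

theorem norm_apply_le_half_pow (hTadd : ∀ t s, T (t + s) = (T t).comp (T s)) {C : ℝ}
    (hC : ∀ t, ‖T t‖ ≤ C) (hhalf : ∀ x, ∃ t ≤ τ, ‖T t x‖ ≤ ‖x‖ / 2) (n : ℕ) :
    ∀ t, n * τ ≤ t → ∀ x, ‖T t x‖ ≤ C * (1 / 2) ^ n * ‖x‖ := by
  induction n with
  | zero => exact fun t _ x => by simpa using (T t).le_of_opNorm_le (hC t) x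
  | succ n ih =>
    intro t ht x
    obtain ⟨s, hs, hTs⟩ := hhalf x
    have hst : n * τ + s ≤ t := by
      refine (add_le_add_right hs _).trans ?_
      rwa [Nat.cast_succ, add_one_mul] at ht
    have hC0 : 0 ≤ C := (norm_nonneg _).trans (hC 0)
    calc ‖T t x‖ ≤ C * (1 / 2) ^ n * ‖T s x‖ :=
          apply_eq_apply_sub_apply hTadd (le_of_add_le_right hst) x ▸
            ih _ (le_tsub_of_add_le_right hst) _
      _ ≤ C * (1 / 2) ^ n * (‖x‖ / 2) := by gcongr
      _ = C * (1 / 2) ^ (n + 1) * ‖x‖ := by ring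

end Halving

theorem NNReal.half_pow_floor_div_le (t : ℝ≥0) {τ : ℝ≥0} (hτ : 0 < τ) :
    (1 / 2 : ℝ) ^ ⌊t / τ⌋₊ ≤ 2 * Real.exp (-(Real.log 2 / τ) * t) := by
  have hfloor : (t : ℝ) / τ < ⌊t / τ⌋₊ + 1 := by exact_mod_cast Nat.lt_floor_add_one (t / τ)
  have hlog : 0 < Real.log 2 := Real.log_pos one_lt_two
  have hτ' : (0 : ℝ) < τ := hτ
  calc (1 / 2 : ℝ) ^ ⌊t / τ⌋₊ = Real.exp (-(⌊t / τ⌋₊ * Real.log 2)) := by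
        rw [Real.exp_neg, ← Real.log_pow, Real.exp_log (by positivity), one_div, inv_pow]
    _ ≤ Real.exp (Real.log 2 - Real.log 2 / τ * t) := by
        gcongr
        rw [div_mul_eq_mul_div, mul_div_assoc]
        nlinarith
    _ = 2 * Real.exp (-(Real.log 2 / τ) * t) := by
        rw [sub_eq_add_neg, Real.exp_add, Real.exp_log two_pos, neg_mul]

theorem exists_exp_bound_of_weakly_attractive {X : Type*} [NormedAddCommGroup X]
    [NormedSpace ℝ X] [CompleteSpace X] {T : ℝ≥0 → X →L[ℝ] X}
    (hTadd : ∀ t s, T (t + s) = (T t).comp (T s)) (hTcont : ∀ x, Continuous fun t => T t x)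
    (hwa : ∃ τ : ℝ≥0, ∀ x : X, ‖x‖₊ ≤ 1 → ∃ t ≤ τ, ‖T t x‖₊ ≤ 1 / 2) :
    ∃ M ω : ℝ, 0 < M ∧ 0 < ω ∧
      ∀ (t : ℝ≥0) (x : X), ‖T t x‖ ≤ M * Real.exp (-ω * t) * ‖x‖ := by
  obtain ⟨τ₀, hτ₀⟩ := hwa
  set τ := τ₀ + 1
  have hτ : 0 < τ := add_pos_of_nonneg_of_pos zero_le one_pos
  have hhalf : ∀ x, ∃ t ≤ τ, ‖T t x‖ ≤ ‖x‖ / 2 := fun x =>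
    (exists_norm_apply_le_half hτ₀ x).imp fun _ h => ⟨h.1.trans le_self_add, h.2⟩
  have hloc (s : ℝ≥0) : ∃ D, ∀ t ≤ s, ‖T t‖ ≤ D :=
    (ContinuousLinearMap.exists_opNorm_le_of_isCompact hTcont isCompact_Icc).imp
      fun _ h t ht => h t ⟨zero_le, ht⟩
  obtain ⟨C, hC⟩ := hloc τ
  have hglob := opNorm_le_of_halving hTadd hloc
    (fun t ht => (hC t ht).trans (le_max_left C 1)) hhalf
  refine ⟨2 * max C 1, Real.log 2 / τ, by positivity,
    div_pos (Real.log_pos one_lt_two) hτ, fun t x => ?_⟩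
  calc ‖T t x‖ ≤ max C 1 * (1 / 2) ^ ⌊t / τ⌋₊ * ‖x‖ :=
        norm_apply_le_half_pow hTadd hglob hhalf _ t
          ((le_div_iff₀ hτ).1 (Nat.floor_le zero_le)) x
    _ ≤ max C 1 * (2 * Real.exp (-(Real.log 2 / τ) * t)) * ‖x‖ := by
        gcongr
        exact NNReal.half_pow_floor_div_le t hτ
    _ = 2 * max C 1 * Real.exp (-(Real.log 2 / τ) * t) * ‖x‖ := by ring

theorem MeasureTheory.setIntegral_Ioi_comp_add_right {E : Type*} [NormedAddCommGroup E]
    [NormedSpace ℝ E] (f : ℝ → E) (a s : ℝ) :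
    ∫ t in Set.Ioi a, f (t + s) = ∫ t in Set.Ioi (a + s), f t := by
  have := (measurePreserving_add_right volume s).setIntegral_preimage_emb
    (MeasurableEquiv.addRight s).measurableEmbedding f (Set.Ioi (a + s))
  rwa [Set.preimage_add_const_Ioi, add_sub_cancel_right] at this

open MeasureTheory

section OrbitNormIntegral

variable {X : Type*} [NormedAddCommGroup X] [NormedSpace ℝ X] {T : ℝ≥0 → X →L[ℝ] X}

def orbitNormIntegral (T : ℝ≥0 → X →L[ℝ] X) (x : X) : ℝ :=
  ∫ t in Set.Ioi (0 : ℝ), ‖T t.toNNReal x‖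

theorem integrableOn_norm_orbit {M ω : ℝ} (hTcont : ∀ x, Continuous fun t => T t x)
    (hω : 0 < ω) (hb : ∀ (t : ℝ≥0) (x : X), ‖T t x‖ ≤ M * Real.exp (-ω * t) * ‖x‖) (x : X) :
    IntegrableOn (fun t : ℝ => ‖T t.toNNReal x‖) (Set.Ioi 0) := by
  refine ((exp_neg_integrableOn_Ioi 0 hω).const_mul (M * ‖x‖)).mono'
    ((hTcont x).norm.comp continuous_real_toNNReal).aestronglyMeasurable.restrict ?_
  refine (ae_restrict_iff' measurableSet_Ioi).2 (.of_forall fun t (ht : 0 < t) => ?_)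
  simpa [Real.coe_toNNReal t ht.le, mul_right_comm] using hb t.toNNReal x

theorem orbitNormIntegral_le {M ω : ℝ} (hTcont : ∀ x, Continuous fun t => T t x) (hω : 0 < ω)
    (hb : ∀ (t : ℝ≥0) (x : X), ‖T t x‖ ≤ M * Real.exp (-ω * t) * ‖x‖) (x : X) :
    orbitNormIntegral T x ≤ M / ω * ‖x‖ := by
  calc orbitNormIntegral T x ≤ ∫ t in Set.Ioi (0 : ℝ), M * ‖x‖ * Real.exp (-ω * t) :=
        setIntegral_mono_on (integrableOn_norm_orbit hTcont hω hb x)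
          ((exp_neg_integrableOn_Ioi 0 hω).const_mul _) measurableSet_Ioi fun t (ht : 0 < t) => by
            simpa [Real.coe_toNNReal t ht.le, mul_right_comm] using hb t.toNNReal x
    _ = M / ω * ‖x‖ := by
        rw [integral_const_mul, integral_exp_mul_Ioi (neg_neg_of_pos hω)]
        field_simp
        simp

theorem orbitNormIntegral_le_add
    (hint : ∀ x, IntegrableOn (fun t : ℝ => ‖T t.toNNReal x‖) (Set.Ioi 0)) (x y : X) :
    orbitNormIntegral T x ≤ orbitNormIntegral T y + orbitNormIntegral T (x - y) := by
  rw [orbitNormIntegral, orbitNormIntegral, orbitNormIntegral, ← integral_add (hint y) (hint _)]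
  refine setIntegral_mono_on (hint x) ((hint y).add (hint _)) measurableSet_Ioi fun t _ => ?_
  simpa using norm_add_le (T t.toNNReal y) (T t.toNNReal (x - y))

theorem continuous_orbitNormIntegral
    (hint : ∀ x, IntegrableOn (fun t : ℝ => ‖T t.toNNReal x‖) (Set.Ioi 0)) {K : ℝ}
    (hK : ∀ x, orbitNormIntegral T x ≤ K * ‖x‖) :
    Continuous (orbitNormIntegral T) :=
  (LipschitzWith.of_le_add_mul' K fun x y =>
    (orbitNormIntegral_le_add hint x y).trans <| by
      rw [dist_eq_norm]
      gcongr
      exact hK _).continuous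

theorem orbitNormIntegral_sub_apply
    {x : X} (hint : IntegrableOn (fun t : ℝ => ‖T t.toNNReal x‖) (Set.Ioi 0))
    (hTadd : ∀ t s, T (t + s) = (T t).comp (T s)) (s : ℝ≥0) :
    orbitNormIntegral T x - orbitNormIntegral T (T s x) =
      ∫ t in (0 : ℝ)..s, ‖T t.toNNReal x‖ := by
  have hshift : orbitNormIntegral T (T s x) = ∫ t in Set.Ioi (s : ℝ), ‖T t.toNNReal x‖ := by
    rw [← zero_add (s : ℝ), ← setIntegral_Ioi_comp_add_right]
    refine setIntegral_congr_fun measurableSet_Ioi fun t (ht : 0 < t) => ?_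
    rw [Real.toNNReal_add ht.le s.coe_nonneg, Real.toNNReal_coe, hTadd]
    rfl
  rw [hshift, orbitNormIntegral, intervalIntegral.integral_Ioi_sub_Ioi hint s.coe_nonneg]

theorem tendsto_slope_orbitNormIntegral
    {x : X} (hint : IntegrableOn (fun t : ℝ => ‖T t.toNNReal x‖) (Set.Ioi 0))
    (hT0 : T 0 = ContinuousLinearMap.id ℝ X) (hTadd : ∀ t s, T (t + s) = (T t).comp (T s))
    (hTcont : Continuous fun t => T t x) :
    Tendsto (fun s : ℝ≥0 => (orbitNormIntegral T (T s x) - orbitNormIntegral T x) / s)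
      (𝓝[>] 0) (𝓝 (-‖x‖)) := by
  have hf : Continuous fun t : ℝ => ‖T t.toNNReal x‖ :=
    hTcont.norm.comp continuous_real_toNNReal
  have hderiv := ((hf.integral_hasStrictDerivAt 0 0).hasDerivAt.tendsto_slope_zero_right.comp
    (by simpa using NNReal.tendsto_const_add_coe_nhdsGT 0)).neg
  refine hderiv.congr (fun s => ?_) |>.trans_eq ?_
  · simp only [Function.comp_apply, zero_add, intervalIntegral.integral_same, sub_zero,
      smul_eq_mul, ← orbitNormIntegral_sub_apply hint hTadd s]
    ring
  · simp [hT0]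

theorem orbitNormIntegral_pos
    {x : X} (hint : IntegrableOn (fun t : ℝ => ‖T t.toNNReal x‖) (Set.Ioi 0))
    (hT0 : T 0 = ContinuousLinearMap.id ℝ X) (hTadd : ∀ t s, T (t + s) = (T t).comp (T s))
    (hTcont : Continuous fun t => T t x) (hx : x ≠ 0) : 0 < orbitNormIntegral T x := by
  obtain ⟨s, hs, (hspos : 0 < s)⟩ :=
    (((tendsto_slope_orbitNormIntegral hint hT0 hTadd hTcont).eventually
      (gt_mem_nhds (neg_neg_of_pos (norm_pos_iff.2 hx)))).and self_mem_nhdsWithin).exists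
  have hVs : 0 ≤ orbitNormIntegral T (T s x) := integral_nonneg fun _ => norm_nonneg _
  have := (div_neg_iff.1 hs).resolve_left (fun h => h.2.not_gt (by exact_mod_cast hspos))
  linarith [this.1]

end OrbitNormIntegral

theorem exists_nonCoerciveLyapunov_of_exp_bound {X : Type*} [NormedAddCommGroup X]
    [NormedSpace ℝ X] {T : ℝ≥0 → X →L[ℝ] X} (hT0 : T 0 = ContinuousLinearMap.id ℝ X)
    (hTadd : ∀ t s, T (t + s) = (T t).comp (T s)) (hTcont : ∀ x, Continuous fun t => T t x)
    {M ω : ℝ} (hM : 0 < M) (hω : 0 < ω)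
    (hb : ∀ (t : ℝ≥0) (x : X), ‖T t x‖ ≤ M * Real.exp (-ω * t) * ‖x‖) :
    ∃ V : X → ℝ, Continuous V ∧ V 0 = 0 ∧ (∀ x : X, 0 ≤ V x) ∧
      (∃ ψ₂ : ℝ≥0 → ℝ≥0, ClassKinf ψ₂ ∧
        ∀ x : X, x ≠ 0 → 0 < V x ∧ V x ≤ (ψ₂ ‖x‖₊ : ℝ)) ∧
      (∃ α : ℝ≥0 → ℝ≥0, ClassK α ∧ ∀ x : X, x ≠ 0 →
        liminf (fun t : ℝ≥0 => (V (T t x) - V x) / (t : ℝ)) (𝓝[>] 0) ≤ -(α ‖x‖₊ : ℝ)) := by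
  have hint := integrableOn_norm_orbit hTcont hω hb
  have hle := orbitNormIntegral_le hTcont hω hb
  refine ⟨orbitNormIntegral T, continuous_orbitNormIntegral hint hle,
    by simp [orbitNormIntegral], fun x => integral_nonneg fun _ => norm_nonneg _,
    ⟨fun r => (M / ω).toNNReal * r, classKinf_const_mul (Real.toNNReal_pos.2 (div_pos hM hω)),
      fun x hx => ⟨orbitNormIntegral_pos (hint x) hT0 hTadd (hTcont x) hx, ?_⟩⟩,
    ⟨id, classK_id, fun x _ =>
      (tendsto_slope_orbitNormIntegral (hint x) hT0 hTadd (hTcont x)).liminf_eq.le⟩⟩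
  simpa [Real.coe_toNNReal _ (div_pos hM hω).le] using hle x

/-- criteria for exponential stability of a strongly continuous
semigroup of bounded linear operators on a Banach space. -/
theorem stmt19 {X : Type*} [NormedAddCommGroup X] [NormedSpace ℝ X] [CompleteSpace X]
    (T : ℝ≥0 → X →L[ℝ] X)
    (hT0 : T 0 = ContinuousLinearMap.id ℝ X)
    (hTadd : ∀ t s : ℝ≥0, T (t + s) = (T t).comp (T s))
    (hTcont : ∀ x : X, Continuous fun t : ℝ≥0 => T t x) :
    [ (∃ M ω : ℝ, 0 < M ∧ 0 < ω ∧
        ∀ (t : ℝ≥0) (x : X), ‖T t x‖ ≤ M * Real.exp (-ω * (t : ℝ)) * ‖x‖),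
      (∃ β : ℝ≥0 → ℝ≥0 → ℝ≥0, ClassKL β ∧
        ∀ (t : ℝ≥0) (x : X), ‖T t x‖₊ ≤ β ‖x‖₊ t),
      (∀ ε : ℝ≥0, 0 < ε → ∀ r : ℝ≥0, 0 < r → ∃ τ : ℝ≥0,
        ∀ x : X, ‖x‖₊ ≤ r → ∀ t : ℝ≥0, τ ≤ t → ‖T t x‖₊ ≤ ε),
      (∀ ε : ℝ≥0, 0 < ε → ∀ r : ℝ≥0, 0 < r → ∃ τ : ℝ≥0,
        ∀ x : X, ‖x‖₊ ≤ r → ∃ t ≤ τ, ‖T t x‖₊ ≤ ε),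
      (∃ V : X → ℝ, Continuous V ∧ V 0 = 0 ∧ (∀ x : X, 0 ≤ V x) ∧
        (∃ ψ₂ : ℝ≥0 → ℝ≥0, ClassKinf ψ₂ ∧
          ∀ x : X, x ≠ 0 → 0 < V x ∧ V x ≤ (ψ₂ ‖x‖₊ : ℝ)) ∧
        (∃ α : ℝ≥0 → ℝ≥0, ClassK α ∧ ∀ x : X, x ≠ 0 →
          Filter.liminf (fun t : ℝ≥0 => (V (T t x) - V x) / (t : ℝ))
            (𝓝[>] (0 : ℝ≥0)) ≤ -(α ‖x‖₊ : ℝ))) ].TFAE := by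
  tfae_have 1 → 2 := by
    rintro ⟨M, ω, hM, hω, hb⟩
    refine ⟨_, classKL_mul_exp hM hω, fun t x => ?_⟩
    rw [← NNReal.coe_le_coe, coe_nnnorm, Real.coe_toNNReal _ (by positivity)]
    simpa only [coe_nnnorm, mul_right_comm] using hb t x
  tfae_have 2 → 3 := by
    rintro ⟨β, hβ, hbound⟩ ε hε r hr
    exact (hβ.exists_forall_le hε hr).imp fun τ hτ x hx t ht => (hbound t x).trans (hτ _ hx t ht)
  tfae_have 3 → 4 := fun h3 ε hε r hr =>
    (h3 ε hε r hr).imp fun τ hτ x hx => ⟨τ, le_rfl, hτ x hx τ le_rfl⟩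
  tfae_have 4 → 1 := fun h4 =>
    exists_exp_bound_of_weakly_attractive hTadd hTcont (h4 (1 / 2) (by norm_num) 1 one_pos)
  tfae_have 1 → 5 := fun ⟨_, _, hM, hω, hb⟩ =>
    exists_nonCoerciveLyapunov_of_exp_bound hT0 hTadd hTcont hM hω hb
  tfae_have 5 → 4 := by
    rintro ⟨V, hV, -, hV0, ⟨ψ, hψ, hVψ⟩, ⟨α, hα, hdecay⟩⟩ ε hε r -
    exact exists_time_nnnorm_le_of_lyapunov (Φ := fun t => T t) (by simp [hT0])
      (fun t s x => by rw [hTadd]; rfl) hTcont hV hV0 hψ.1.2.1.monotone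
      (fun x hx => (hVψ x hx).2) hα hdecay hε r
  tfae_finish
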